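/- For h ∈ SL₂^±(R) with σ₁(h) > σ₂(h) and any r ∈ [σ₂(h)/σ₁(h), 1/10), the image h(b(h⁻, r)) of the attracting region satisfies B(h⁺, (σ₂(h)/σ₁(h))/(2r)) ⊆ h(b(h⁻, r)) ⊆ B(h⁺, (σ₂(h)/σ₁(h))/r²). -/

import Mathlib

/-!
Both inclusions reduce, through the isometries `k` and `k'` and the scale invariance of
`projDist`, to the diagonal map `diag(a₀, a₁)`, with `h⁺ = e₀` and `h⁻ = e₁`. There
`d(x, e₁) = |x₀|/‖x‖` and `d(y, e₀) = |y₁|/‖y‖`. If `|x₀| > r‖x‖`, the image has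
`|a₁x₁| ≤ a₁‖x‖` against norm `≥ a₀|x₀| > a₀r‖x‖`, giving the bound `(a₁/a₀)/r`. Conversely a
unit `y` with `|y₁| ≤ (a₁/a₀)/(2r) ≤ 1/2` has `y₀² ≥ 3/4`, and its preimage
`(y₀/a₀, y₁/a₁)` then satisfies `r‖x‖ < |x₀|` because `r < 1/10`.
-/

open scoped RealInnerProductSpace
noncomputable section

/-- Projective distance `d(ℝv, ℝw) = ‖v ∧ w‖ / (‖v‖ ‖w‖)`. -/
def projDist {n : ℕ} (v w : EuclideanSpace ℝ (Fin n)) : ℝ :=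
  Real.sqrt (‖v‖ ^ 2 * ‖w‖ ^ 2 - ⟪v, w⟫ ^ 2) / (‖v‖ * ‖w‖)

/-- Distance from the projective point `ℝv` to the projective hyperplane with
normal vector `u`. -/
def distToHyp {n : ℕ} (v u : EuclideanSpace ℝ (Fin n)) : ℝ :=
  |⟪v, u⟫| / (‖v‖ * ‖u‖)

/-- The diagonal map with entries `a`. -/
def diagMap {n : ℕ} (a : Fin n → ℝ) (v : EuclideanSpace ℝ (Fin n)) :
    EuclideanSpace ℝ (Fin n) :=
  (WithLp.equiv 2 (Fin n → ℝ)).symm (fun i => a i * v i)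

lemma EuclideanSpace.norm_sq_fin_two (z : EuclideanSpace ℝ (Fin 2)) :
    ‖z‖ ^ 2 = z 0 ^ 2 + z 1 ^ 2 := by
  rw [EuclideanSpace.norm_eq, Real.sq_sqrt (by positivity)]
  simp [Fin.sum_univ_two, sq_abs]

lemma EuclideanSpace.inner_fin_two (v w : EuclideanSpace ℝ (Fin 2)) :
    ⟪v, w⟫ = v 0 * w 0 + v 1 * w 1 := by
  simp [PiLp.inner_apply, Fin.sum_univ_two, mul_comm]

lemma projDist_fin_two (v w : EuclideanSpace ℝ (Fin 2)) :
    projDist v w = |v 0 * w 1 - v 1 * w 0| / (‖v‖ * ‖w‖) := by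
  have hwedge : ‖v‖ ^ 2 * ‖w‖ ^ 2 - ⟪v, w⟫ ^ 2 = (v 0 * w 1 - v 1 * w 0) ^ 2 := by
    rw [EuclideanSpace.norm_sq_fin_two, EuclideanSpace.norm_sq_fin_two,
      EuclideanSpace.inner_fin_two]
    ring
  rw [projDist, hwedge, Real.sqrt_sq_eq_abs]

lemma projDist_single_one (v : EuclideanSpace ℝ (Fin 2)) :
    projDist v (EuclideanSpace.single 1 1) = |v 0| / ‖v‖ := by
  simp [projDist_fin_two]

lemma projDist_single_zero (v : EuclideanSpace ℝ (Fin 2)) :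
    projDist v (EuclideanSpace.single 0 1) = |v 1| / ‖v‖ := by
  simp [projDist_fin_two]

lemma projDist_map {n : ℕ} (f : EuclideanSpace ℝ (Fin n) ≃ₗᵢ[ℝ] EuclideanSpace ℝ (Fin n))
    (v w : EuclideanSpace ℝ (Fin n)) : projDist (f v) (f w) = projDist v w := by
  rw [projDist, projDist, f.norm_map, f.norm_map, f.inner_map_map]

lemma projDist_smul_left {n : ℕ} {c : ℝ} (hc : c ≠ 0) (v w : EuclideanSpace ℝ (Fin n)) :
    projDist (c • v) w = projDist v w := by
  have hscale : (|c| * ‖v‖) ^ 2 * ‖w‖ ^ 2 - (c * ⟪v, w⟫) ^ 2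
      = c ^ 2 * (‖v‖ ^ 2 * ‖w‖ ^ 2 - ⟪v, w⟫ ^ 2) := by
    rw [mul_pow, sq_abs]; ring
  rw [projDist, projDist, norm_smul, real_inner_smul_left, Real.norm_eq_abs, hscale,
    Real.sqrt_mul (sq_nonneg c), Real.sqrt_sq_eq_abs, mul_assoc,
    mul_div_mul_left _ _ (abs_ne_zero.mpr hc)]

lemma ne_zero_of_lt_projDist {n : ℕ} {r : ℝ} (hr : 0 ≤ r) {v w : EuclideanSpace ℝ (Fin n)}
    (hv : r < projDist v w) : v ≠ 0 := by
  rintro rfl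
  have hzero : projDist (0 : EuclideanSpace ℝ (Fin n)) w = 0 := by simp [projDist]
  linarith

lemma diagMap_apply {n : ℕ} (a : Fin n → ℝ) (v : EuclideanSpace ℝ (Fin n)) (i : Fin n) :
    diagMap a v i = a i * v i := rfl

lemma diagMap_smul {n : ℕ} (a : Fin n → ℝ) (c : ℝ) (v : EuclideanSpace ℝ (Fin n)) :
    diagMap a (c • v) = c • diagMap a v := by
  ext i
  simp only [diagMap_apply, PiLp.smul_apply, smul_eq_mul]
  ring

lemma diagMap_diagMap_inv {n : ℕ} {a : Fin n → ℝ} (ha : ∀ i, a i ≠ 0)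
    (v : EuclideanSpace ℝ (Fin n)) : diagMap a (diagMap a⁻¹ v) = v := by
  ext i
  simp only [diagMap_apply, Pi.inv_apply]
  field_simp [ha i]

lemma projDist_diagMap_single_zero_le {a : Fin 2 → ℝ} (ha : ∀ i, 0 < a i) {r : ℝ}
    (hr : 0 < r) {u : EuclideanSpace ℝ (Fin 2)}
    (hu : r < projDist u (EuclideanSpace.single 1 1)) :
    projDist (diagMap a u) (EuclideanSpace.single 0 1) ≤ (a 1 / a 0) / r := by
  have hu_pos : 0 < ‖u‖ := norm_pos_iff.mpr (ne_zero_of_lt_projDist hr.le hu)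
  rw [projDist_single_one, lt_div_iff₀ hu_pos] at hu
  have hu1 : |u 1| ≤ ‖u‖ := by simpa using PiLp.norm_apply_le u 1
  have hz0 : a 0 * |u 0| ≤ ‖diagMap a u‖ := by
    simpa [diagMap_apply, abs_mul, abs_of_pos (ha 0)] using PiLp.norm_apply_le (diagMap a u) 0
  have hz_pos : 0 < ‖diagMap a u‖ := (mul_pos (ha 0) ((mul_pos hr hu_pos).trans hu)).trans_le hz0
  rw [projDist_single_zero, diagMap_apply, abs_mul, abs_of_pos (ha 1), div_div,
    div_le_div_iff₀ hz_pos (mul_pos (ha 0) hr)]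
  calc a 1 * |u 1| * (a 0 * r) ≤ a 1 * (a 0 * (r * ‖u‖)) := by
        linarith [mul_le_mul_of_nonneg_left hu1 (mul_pos (mul_pos (ha 1) (ha 0)) hr).le]
    _ ≤ a 1 * (a 0 * |u 0|) := by gcongr <;> exact (ha _).le
    _ ≤ a 1 * ‖diagMap a u‖ := by gcongr; exact (ha 1).le

lemma lt_projDist_diagMap_inv_single_one {a : Fin 2 → ℝ} (ha : ∀ i, 0 < a i) {r : ℝ}
    (hr1 : a 1 / a 0 ≤ r) (hr2 : r < 1 / 10) {w : EuclideanSpace ℝ (Fin 2)} (hw : w ≠ 0)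
    (hw_near : projDist w (EuclideanSpace.single 0 1) ≤ (a 1 / a 0) / (2 * r)) :
    r < projDist (diagMap a⁻¹ w) (EuclideanSpace.single 1 1) := by
  have ha0 := ha 0
  have ha1 := ha 1
  have hr : 0 < r := (div_pos ha1 ha0).trans_le hr1
  have hn : 0 < ‖w‖ := norm_pos_iff.mpr hw
  set v := diagMap a⁻¹ w with hv
  have hv0 : v 0 = w 0 / a 0 := by simp [hv, diagMap_apply, div_eq_inv_mul]
  have hv1 : v 1 = w 1 / a 1 := by simp [hv, diagMap_apply, div_eq_inv_mul]
  rw [projDist_single_zero, div_le_div_iff₀ hn (by positivity)] at hw_near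
  have hw1 : 4 * r ^ 2 * w 1 ^ 2 ≤ (a 1 / a 0) ^ 2 * ‖w‖ ^ 2 := by
    have := pow_le_pow_left₀ (by positivity) hw_near 2
    rw [mul_pow, mul_pow, sq_abs] at this
    linarith
  have hw1' : 4 * w 1 ^ 2 ≤ ‖w‖ ^ 2 := by
    have hε := mul_le_mul_of_nonneg_right (pow_le_pow_left₀ (div_pos ha1 ha0).le hr1 2)
      (sq_nonneg ‖w‖)
    exact le_of_mul_le_mul_left (by linarith) (by positivity : 0 < r ^ 2)
  have hw0 : 3 * ‖w‖ ^ 2 ≤ 4 * w 0 ^ 2 := by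
    nlinarith [EuclideanSpace.norm_sq_fin_two w]
  have hv_far : 4 * (r ^ 2 * v 1 ^ 2) ≤ ‖w‖ ^ 2 / a 0 ^ 2 := by
    calc 4 * (r ^ 2 * v 1 ^ 2) = 4 * r ^ 2 * w 1 ^ 2 / a 1 ^ 2 := by rw [hv1]; ring
      _ ≤ (a 1 / a 0) ^ 2 * ‖w‖ ^ 2 / a 1 ^ 2 := by gcongr
      _ = ‖w‖ ^ 2 / a 0 ^ 2 := by field_simp
  have hv_near : 3 * (‖w‖ ^ 2 / a 0 ^ 2) ≤ 4 * v 0 ^ 2 := by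
    rw [hv0, div_pow]
    field_simp
    linarith
  have hv_pos : 0 < v 0 ^ 2 := by
    have : 0 < ‖w‖ ^ 2 / a 0 ^ 2 := by positivity
    linarith
  have hr_sq : r ^ 2 < 1 / 100 := by nlinarith
  have hv_sq : (r * ‖v‖) ^ 2 < |v 0| ^ 2 := by
    rw [mul_pow, EuclideanSpace.norm_sq_fin_two, sq_abs]
    linarith [mul_lt_mul_of_pos_right hr_sq hv_pos]
  rw [projDist_single_one, lt_div_iff₀ (norm_pos_iff.mpr fun h ↦ by simp [h] at hv_pos)]
  exact lt_of_pow_lt_pow_left₀ 2 (abs_nonneg _) hv_sq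

theorem image_of_attracting_region_general
    (h : EuclideanSpace ℝ (Fin 2) →ₗ[ℝ] EuclideanSpace ℝ (Fin 2))
    (k k' : EuclideanSpace ℝ (Fin 2) ≃ₗᵢ[ℝ] EuclideanSpace ℝ (Fin 2))
    (a : Fin 2 → ℝ) (ha : ∀ i, 0 < a i)
    (hh : ∀ v, h v = k' (diagMap a (k v)))
    (r : ℝ) (hr1 : a 1 / a 0 ≤ r) (hr2 : r < 1 / 10) :
    -- `B(h⁺, (σ₂/σ₁)/(2r)) ⊆ h(b(h⁻, r))`
    (∀ y : EuclideanSpace ℝ (Fin 2), ‖y‖ = 1 →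
      projDist y (k' (EuclideanSpace.single (0 : Fin 2) 1)) ≤ (a 1 / a 0) / (2 * r) →
      ∃ x : EuclideanSpace ℝ (Fin 2), ‖x‖ = 1 ∧
        r < projDist x (k.symm (EuclideanSpace.single (1 : Fin 2) 1)) ∧
        ∃ c : ℝ, c ≠ 0 ∧ h x = c • y) ∧
    -- `h(b(h⁻, r)) ⊆ B(h⁺, (σ₂/σ₁)/r²)`
    (∀ x : EuclideanSpace ℝ (Fin 2), x ≠ 0 →
      r < projDist x (k.symm (EuclideanSpace.single (1 : Fin 2) 1)) →
      projDist (h x) (k' (EuclideanSpace.single (0 : Fin 2) 1)) ≤ (a 1 / a 0) / r ^ 2) := by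
  have hr : 0 < r := (div_pos (ha 1) (ha 0)).trans_le hr1
  refine ⟨fun y hy hy_near ↦ ?_, fun x _ hx_far ↦ ?_⟩
  · set v := diagMap a⁻¹ (k'.symm y)
    have hv_far : r < projDist v (EuclideanSpace.single 1 1) := by
      refine lt_projDist_diagMap_inv_single_one ha hr1 hr2 ?_ ?_
      · exact k'.symm.map_ne_zero_iff.mpr (norm_ne_zero_iff.mp (by simp [hy]))
      · rwa [← projDist_map k', k'.apply_symm_apply]
    have hv : ‖v‖ ≠ 0 := norm_ne_zero_iff.mpr (ne_zero_of_lt_projDist hr.le hv_far)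
    refine ⟨k.symm (‖v‖⁻¹ • v), ?_, ?_, ‖v‖⁻¹, inv_ne_zero hv, ?_⟩
    · rw [k.symm.norm_map, norm_smul, norm_inv, norm_norm, inv_mul_cancel₀ hv]
    · rwa [projDist_map, projDist_smul_left (inv_ne_zero hv)]
    · rw [hh, k.apply_symm_apply, diagMap_smul, diagMap_diagMap_inv fun i ↦ (ha i).ne',
        map_smul, k'.apply_symm_apply]
  · have hkx_far : r < projDist (k x) (EuclideanSpace.single 1 1) := by
      rwa [← k.apply_symm_apply (EuclideanSpace.single 1 1), projDist_map]
    calc projDist (h x) (k' (EuclideanSpace.single 0 1))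
        = projDist (diagMap a (k x)) (EuclideanSpace.single 0 1) := by rw [hh, projDist_map]
      _ ≤ (a 1 / a 0) / r := projDist_diagMap_single_zero_le ha hr hkx_far
      _ ≤ (a 1 / a 0) / r ^ 2 :=
        div_le_div_of_nonneg_left (div_pos (ha 1) (ha 0)).le (by positivity) (by nlinarith)

theorem image_of_attracting_region
    (h : EuclideanSpace ℝ (Fin 2) →ₗ[ℝ] EuclideanSpace ℝ (Fin 2))
    (k k' : EuclideanSpace ℝ (Fin 2) ≃ₗᵢ[ℝ] EuclideanSpace ℝ (Fin 2))
    (a : Fin 2 → ℝ) (ha : ∀ i, 0 < a i)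
    (hgap : a 1 < a 0) (hdet : a 0 * a 1 = 1)
    (hh : ∀ v, h v = k' (diagMap a (k v)))
    (r : ℝ) (hr1 : a 1 / a 0 ≤ r) (hr2 : r < 1 / 10) :
    -- `B(h⁺, (σ₂/σ₁)/(2r)) ⊆ h(b(h⁻, r))`
    (∀ y : EuclideanSpace ℝ (Fin 2), ‖y‖ = 1 →
      projDist y (k' (EuclideanSpace.single (0 : Fin 2) 1)) ≤ (a 1 / a 0) / (2 * r) →
      ∃ x : EuclideanSpace ℝ (Fin 2), ‖x‖ = 1 ∧
        r < projDist x (k.symm (EuclideanSpace.single (1 : Fin 2) 1)) ∧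
        ∃ c : ℝ, c ≠ 0 ∧ h x = c • y) ∧
    -- `h(b(h⁻, r)) ⊆ B(h⁺, (σ₂/σ₁)/r²)`
    (∀ x : EuclideanSpace ℝ (Fin 2), x ≠ 0 →
      r < projDist x (k.symm (EuclideanSpace.single (1 : Fin 2) 1)) →
      projDist (h x) (k' (EuclideanSpace.single (0 : Fin 2) 1)) ≤ (a 1 / a 0) / r ^ 2) :=
  image_of_attracting_region_general h k k' a ha hh r hr1 hr2
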